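/- For every finite rooted tree T with t leaves in which no vertex has exactly one child, there exists a finite rooted binary tree T' (every vertex has exactly two children or none) with t leaves, in which the depths of any two leaves differ by at most 1, such that g(T') ≥ g(T). -/

import Mathlib

attribute [local instance] Classical.propDecidable

/-- A finite rooted tree, encoded by a parent function together with a depth
function recording the graph distance to the root. -/
structure FiniteRootedTree where
  V : Type
  fintypeV : Fintype V
  root : V
  parent : V → V
  depth : V → ℕ
  depth_root : depth root = 0
  depth_parent : ∀ v, v ≠ root → depth v = depth (parent v) + 1
  root_of_depth_zero : ∀ v, depth v = 0 → v = root

attribute [instance] FiniteRootedTree.fintypeV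

namespace FiniteRootedTree

/-- `u` is a child of `v`. -/
def IsChild (T : FiniteRootedTree) (u v : T.V) : Prop :=
  u ≠ T.root ∧ T.parent u = v

/-- The number of children of `v`. -/
noncomputable def numChildren (T : FiniteRootedTree) (v : T.V) : ℕ :=
  Set.ncard {u : T.V | T.IsChild u v}

/-- A leaf is a vertex with no children. -/
def IsLeaf (T : FiniteRootedTree) (v : T.V) : Prop :=
  ∀ u, ¬ T.IsChild u v

/-- The finset of leaves of `T`. -/
noncomputable def leaves (T : FiniteRootedTree) : Finset T.V :=
  Finset.univ.filter fun v => T.IsLeaf v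

/-- Probability that the random root-to-leaf walk ends at the leaf `l`:
the product of `1 / c(v)` over the vertices `v ≠ l` on the root-to-`l` path
(equivalently, over the strict ancestors `parent^[k+1] l` of `l`). -/
noncomputable def leafProb (T : FiniteRootedTree) (l : T.V) : ℝ :=
  ∏ k ∈ Finset.range (T.depth l), (1 : ℝ) / (T.numChildren (T.parent^[k + 1] l))

/-- The expected length of the random root-to-leaf walk in `T`. -/
noncomputable def g (T : FiniteRootedTree) : ℝ :=
  ∑ l ∈ T.leaves, (T.depth l : ℝ) * T.leafProb l

/-- The number of vertices of the subtree of `T` rooted at `v`, i.e. the number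
of vertices `u` having `v` as an ancestor (including `v` itself). -/
noncomputable def subtreeSize (T : FiniteRootedTree) (v : T.V) : ℕ :=
  Set.ncard {u : T.V | ∃ k : ℕ, T.parent^[k] u = v}

end FiniteRootedTree

/-- The truncations of `T₁` and `T₂` at level `h` (the rooted trees induced on
the vertices of depth at most `h`) are isomorphic as rooted trees. -/
def TruncIso (T₁ T₂ : FiniteRootedTree) (h : ℕ) : Prop :=
  ∃ φ : {v : T₁.V // T₁.depth v ≤ h} ≃ {v : T₂.V // T₂.depth v ≤ h},
    (φ ⟨T₁.root, by simp [T₁.depth_root]⟩).val = T₂.root ∧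
    ∀ u u' : {v : T₁.V // T₁.depth v ≤ h},
      T₁.IsChild u'.val u.val ↔ T₂.IsChild (φ u').val (φ u).val

/-- `InjM h U` is the set of root-respecting injective homomorphisms from the
rooted tree `U` into the complete binary tree `M_h`, whose vertices are the
boolean lists of length at most `h`, rooted at the empty list, with the
children of a list being its two one-element extensions. -/
def InjM (h : ℕ) (U : FiniteRootedTree) : Set (U.V → List Bool) :=
  {α | Function.Injective α ∧ (∀ u, (α u).length ≤ h) ∧ α U.root = [] ∧
    ∀ u u' : U.V, U.IsChild u' u → ∃ b : Bool, α u' = α u ++ [b]}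

/-!
By Kraft's equality the leaf probabilities `p_l` sum to `1`, so for every `k`,
`g T = k - 1 + ∑ₗ (depth l - k + 1) p_l`. Without unary vertices `p_l ≤ 2^(-depth l)`, and
`(d - k + 1) 2^(-d) ≤ 2^(-k)` because `n + 1 ≤ 2^n`; hence `g T ≤ k - 1 + t 2^(-k)`.
In a binary tree all of whose leaves have depth `k` or `k + 1`, `p_l = 2^(-depth l)` and every
summand equals `2^(-k)`, so the bound is attained; for `k = ⌊log₂ t⌋` the heap-shaped tree on
`1, …, 2t - 1` is such a tree.
-/

lemma sub_add_one_mul_le_half_pow {d k : ℕ} {p : ℝ} (hp₀ : 0 ≤ p) (hp : p ≤ (1 / 2) ^ d) :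
    ((d : ℝ) - k + 1) * p ≤ (1 / 2) ^ k := by
  rcases lt_or_ge d k with hdk | hkd
  · have hneg : (d : ℝ) - k + 1 ≤ 0 := by
      have : (d : ℝ) + 1 ≤ k := by exact_mod_cast hdk
      linarith
    exact (mul_nonpos_of_nonpos_of_nonneg hneg hp₀).trans (by positivity)
  · obtain ⟨n, rfl⟩ := Nat.exists_eq_add_of_le hkd
    have hn : (n : ℝ) + 1 ≤ 2 ^ n := by
      simpa [add_comm, one_add_one_eq_two] using one_add_mul_le_pow (by norm_num : (-2 : ℝ) ≤ 1) n
    calc ((↑(k + n) : ℝ) - k + 1) * p = (n + 1) * p := by push_cast; ring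
      _ ≤ 2 ^ n * (1 / 2) ^ (k + n) := by gcongr
      _ = (1 / 2) ^ k := by rw [pow_add, mul_left_comm, ← mul_pow]; norm_num

lemma sub_add_one_mul_half_pow_eq {d k : ℕ} (hd : d = k ∨ d = k + 1) :
    ((d : ℝ) - k + 1) * (1 / 2) ^ d = (1 / 2) ^ k := by
  rcases hd with rfl | rfl <;> push_cast <;> ring

namespace FiniteRootedTree

variable (T : FiniteRootedTree)

noncomputable def children (v : T.V) : Finset T.V :=
  Finset.univ.filter (T.IsChild · v)

lemma numChildren_eq_card_children (v : T.V) : T.numChildren v = (T.children v).card := by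
  rw [numChildren, ← Set.ncard_coe_finset]
  congr 1
  ext u
  simp [children]

variable {T}

lemma isLeaf_iff_numChildren_eq_zero {v : T.V} : T.IsLeaf v ↔ T.numChildren v = 0 := by
  rw [numChildren, Set.ncard_eq_zero, Set.eq_empty_iff_forall_notMem]
  rfl

lemma numChildren_ne_zero_of_isChild {u v : T.V} (h : T.IsChild u v) : T.numChildren v ≠ 0 :=
  fun h₀ => isLeaf_iff_numChildren_eq_zero.mpr h₀ u h

lemma IsChild.depth_eq {u v : T.V} (h : T.IsChild u v) : T.depth u = T.depth v + 1 := by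
  rw [T.depth_parent u h.1, h.2]

lemma depth_parent_iterate {v : T.V} {j : ℕ} (h : j ≤ T.depth v) :
    T.depth (T.parent^[j] v) = T.depth v - j := by
  induction j with
  | zero => rfl
  | succ j ih =>
    have hj := ih (by omega)
    have hne : T.parent^[j] v ≠ T.root := fun he => by
      rw [he, T.depth_root] at hj
      omega
    have hparent := IsChild.depth_eq (T := T) ⟨hne, rfl⟩
    rw [Function.iterate_succ_apply']
    omega

lemma isChild_parent_iterate {v : T.V} {j : ℕ} (h : j < T.depth v) :
    T.IsChild (T.parent^[j] v) (T.parent^[j + 1] v) := by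
  refine ⟨fun he => ?_, (Function.iterate_succ_apply' ..).symm⟩
  have hj := depth_parent_iterate h.le
  rw [he, T.depth_root] at hj
  omega

lemma leafProb_root : T.leafProb T.root = 1 := by
  simp [leafProb, T.depth_root]

lemma leafProb_of_isChild {u v : T.V} (h : T.IsChild u v) :
    T.leafProb u = T.leafProb v / T.numChildren v := by
  have hiter (k : ℕ) : T.parent^[k + 1] u = T.parent^[k] v := by
    rw [Function.iterate_succ_apply, h.2]
  rw [leafProb, h.depth_eq, Finset.prod_range_succ', hiter 0, leafProb]
  simp only [hiter, Function.iterate_zero_apply]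
  exact (div_eq_mul_one_div _ _).symm

lemma sum_leafProb_children {v : T.V} (hv : ¬ T.IsLeaf v) :
    ∑ u ∈ T.children v, T.leafProb u = T.leafProb v := by
  have hc : (T.numChildren v : ℝ) ≠ 0 :=
    Nat.cast_ne_zero.mpr (mt isLeaf_iff_numChildren_eq_zero.mpr hv)
  calc ∑ u ∈ T.children v, T.leafProb u
      = ∑ u ∈ T.children v, T.leafProb v / T.numChildren v :=
        Finset.sum_congr rfl fun u hu => leafProb_of_isChild (by simpa [children] using hu)
    _ = T.leafProb v := by
        rw [Finset.sum_const, ← numChildren_eq_card_children, nsmul_eq_mul]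
        field_simp

variable (T)

theorem sum_leafProb_leaves : ∑ l ∈ T.leaves, T.leafProb l = 1 := by
  have hparent : ∑ u ∈ Finset.univ.erase T.root, T.leafProb u =
      ∑ v ∈ Finset.univ.filter (¬ T.IsLeaf ·), T.leafProb v := by
    rw [← Finset.sum_fiberwise_of_maps_to (g := T.parent)
      (t := Finset.univ.filter (¬ T.IsLeaf ·)) fun u hu => ?_]
    · refine Finset.sum_congr rfl fun v hv => ?_
      rw [← sum_leafProb_children (Finset.mem_filter.mp hv).2]
      congr 1
      ext u
      simp only [children, Finset.mem_filter, Finset.mem_erase, Finset.mem_univ, and_true, true_and]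
      rfl
    · simpa using fun hl => hl u ⟨Finset.ne_of_mem_erase hu, rfl⟩
  have hsplit := Finset.sum_filter_add_sum_filter_not Finset.univ T.IsLeaf T.leafProb
  rw [← Finset.add_sum_erase _ _ (Finset.mem_univ T.root), hparent, leafProb_root] at hsplit
  simpa [leaves] using hsplit

lemma leaves_nonempty : T.leaves.Nonempty := by
  by_contra h
  simpa [Finset.not_nonempty_iff_eq_empty.mp h] using T.sum_leafProb_leaves

lemma leafProb_nonneg (l : T.V) : 0 ≤ T.leafProb l :=
  Finset.prod_nonneg fun _ _ => by positivity

lemma g_eq_sub_one_add_sum (k : ℕ) :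
    T.g = k - 1 + ∑ l ∈ T.leaves, ((T.depth l : ℝ) - k + 1) * T.leafProb l := by
  have hsum : ∑ l ∈ T.leaves, ((T.depth l : ℝ) - k + 1) * T.leafProb l =
      T.g - (k - 1) * ∑ l ∈ T.leaves, T.leafProb l := by
    rw [g, Finset.mul_sum, ← Finset.sum_sub_distrib]
    exact Finset.sum_congr rfl fun _ _ => by ring
  rw [hsum, sum_leafProb_leaves]
  ring

variable {T}

lemma two_le_numChildren_parent_iterate (hone : ∀ v : T.V, T.numChildren v ≠ 1)
    {l : T.V} {j : ℕ} (hj : j < T.depth l) : 2 ≤ T.numChildren (T.parent^[j + 1] l) := by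
  have := numChildren_ne_zero_of_isChild (isChild_parent_iterate hj)
  have := hone (T.parent^[j + 1] l)
  omega

lemma leafProb_le_half_pow (hone : ∀ v : T.V, T.numChildren v ≠ 1) (l : T.V) :
    T.leafProb l ≤ (1 / 2) ^ T.depth l := by
  rw [leafProb, ← Finset.card_range (T.depth l), ← Finset.prod_const, Finset.card_range]
  refine Finset.prod_le_prod (fun _ _ => by positivity) fun j hj => ?_
  have h2 : (2 : ℝ) ≤ T.numChildren (T.parent^[j + 1] l) := by
    exact_mod_cast two_le_numChildren_parent_iterate hone (Finset.mem_range.mp hj)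
  gcongr

lemma leafProb_eq_half_pow (hbin : ∀ v : T.V, T.numChildren v = 2 ∨ T.numChildren v = 0)
    (l : T.V) : T.leafProb l = (1 / 2) ^ T.depth l := by
  rw [leafProb, ← Finset.card_range (T.depth l), ← Finset.prod_const, Finset.card_range]
  refine Finset.prod_congr rfl fun j hj => ?_
  have h₀ := numChildren_ne_zero_of_isChild (isChild_parent_iterate (Finset.mem_range.mp hj))
  rw [(hbin _).resolve_right h₀]
  norm_num

theorem g_le_of_numChildren_ne_one (hone : ∀ v : T.V, T.numChildren v ≠ 1) (k : ℕ) :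
    T.g ≤ k - 1 + T.leaves.card * (1 / 2) ^ k := by
  rw [g_eq_sub_one_add_sum T k, ← nsmul_eq_mul]
  gcongr
  exact Finset.sum_le_card_nsmul _ _ _ fun l _ =>
    sub_add_one_mul_le_half_pow (T.leafProb_nonneg l) (leafProb_le_half_pow hone l)

theorem g_eq_of_binary (hbin : ∀ v : T.V, T.numChildren v = 2 ∨ T.numChildren v = 0) {k : ℕ}
    (hdepth : ∀ l : T.V, T.IsLeaf l → T.depth l = k ∨ T.depth l = k + 1) :
    T.g = k - 1 + T.leaves.card * (1 / 2) ^ k := by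
  rw [g_eq_sub_one_add_sum T k, ← nsmul_eq_mul, ← Finset.sum_const]
  congr 1
  refine Finset.sum_congr rfl fun l hl => ?_
  rw [leafProb_eq_half_pow hbin]
  exact sub_add_one_mul_half_pow_eq (hdepth l (Finset.mem_filter.mp hl).2)

/-- Heap numbering: the parent of `n ≥ 2` is `n / 2`, so the leaves are `t, …, 2t - 1`. -/
noncomputable abbrev heap (t : ℕ) (ht : 1 ≤ t) : FiniteRootedTree where
  V := Finset.Ico 1 (2 * t)
  fintypeV := inferInstance
  root := ⟨1, Finset.mem_Ico.mpr ⟨le_rfl, by omega⟩⟩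
  parent v :=
    if h : 2 ≤ v.1 then ⟨v.1 / 2, Finset.mem_Ico.mpr (by have := Finset.mem_Ico.mp v.2; omega)⟩
    else v
  depth v := Nat.log 2 v.1
  depth_root := Nat.log_one_right 2
  depth_parent v hv := by
    have hv2 : 2 ≤ v.1 := by
      have := Finset.mem_Ico.mp v.2
      by_contra h
      exact hv (Subtype.ext (by simp only; omega))
    have := Nat.log_pos one_lt_two hv2
    simp only [dif_pos hv2, Nat.log_div_base]
    omega
  root_of_depth_zero v hv := by
    have := Finset.mem_Ico.mp v.2
    have := (Nat.log_eq_zero_iff.mp hv).resolve_right (by norm_num)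
    exact Subtype.ext (by simp only; omega)

section Heap

variable {t : ℕ} {ht : 1 ≤ t}

lemma heap_val_mem (v : (heap t ht).V) : 1 ≤ v.1 ∧ v.1 < 2 * t :=
  Finset.mem_Ico.mp v.2

lemma heap_depth (v : (heap t ht).V) : (heap t ht).depth v = Nat.log 2 v.1 := rfl

lemma heap_isChild_iff {u v : (heap t ht).V} : (heap t ht).IsChild u v ↔ u.1 / 2 = v.1 := by
  have hu := heap_val_mem u
  have hv := heap_val_mem v
  have hroot : u ≠ (heap t ht).root ↔ 2 ≤ u.1 := by
    rw [Ne, Subtype.ext_iff]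
    exact ⟨fun h => by change ¬ u.1 = 1 at h; omega, fun h => by change ¬ u.1 = 1; omega⟩
  rw [IsChild, hroot, Subtype.ext_iff]
  constructor
  · rintro ⟨h2, hp⟩
    simpa [heap, dif_pos h2] using hp
  · intro hp
    have h2 : 2 ≤ u.1 := by omega
    exact ⟨h2, by simpa [heap, dif_pos h2] using hp⟩

lemma heap_numChildren (v : (heap t ht).V) :
    (heap t ht).numChildren v = if v.1 < t then 2 else 0 := by
  have hv := heap_val_mem v
  rw [numChildren]
  split_ifs with hvt
  · have hmem : 2 * v.1 ∈ Finset.Ico 1 (2 * t) ∧ 2 * v.1 + 1 ∈ Finset.Ico 1 (2 * t) := by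
      simp only [Finset.mem_Ico]
      omega
    have hset : {u : (heap t ht).V | (heap t ht).IsChild u v} =
        {⟨2 * v.1, hmem.1⟩, ⟨2 * v.1 + 1, hmem.2⟩} := by
      ext u
      simp only [Set.mem_ofPred_eq, Set.mem_insert_iff, Set.mem_singleton_iff, heap_isChild_iff,
        Subtype.ext_iff]
      omega
    rw [hset, Set.ncard_pair (by simp [Subtype.ext_iff])]
  · rw [Set.ncard_eq_zero, Set.eq_empty_iff_forall_notMem]
    intro u hu
    have := heap_val_mem u
    rw [Set.mem_ofPred_eq, heap_isChild_iff] at hu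
    omega

lemma heap_numChildren_eq_two_or_zero (v : (heap t ht).V) :
    (heap t ht).numChildren v = 2 ∨ (heap t ht).numChildren v = 0 := by
  rw [heap_numChildren]
  split_ifs <;> simp

lemma heap_isLeaf_iff {v : (heap t ht).V} : (heap t ht).IsLeaf v ↔ t ≤ v.1 := by
  rw [isLeaf_iff_numChildren_eq_zero, heap_numChildren]
  split_ifs <;> simp <;> omega

lemma card_heap_leaves : (heap t ht).leaves.card = t := by
  have hmap : (heap t ht).leaves.map (Function.Embedding.subtype _) = Finset.Ico t (2 * t) := by
    ext n
    simp only [leaves, Finset.mem_map, Finset.mem_filter, Finset.mem_univ, true_and,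
      heap_isLeaf_iff, Function.Embedding.coe_subtype, Finset.mem_Ico]
    constructor
    · rintro ⟨v, hv, rfl⟩
      exact ⟨hv, (heap_val_mem (ht := ht) v).2⟩
    · intro hn
      exact ⟨⟨n, Finset.mem_Ico.mpr ⟨by omega, hn.2⟩⟩, hn.1, rfl⟩
  rw [← Finset.card_map, hmap, Nat.card_Ico]
  omega

lemma heap_depth_of_isLeaf {l : (heap t ht).V} (hl : (heap t ht).IsLeaf l) :
    (heap t ht).depth l = Nat.log 2 t ∨ (heap t ht).depth l = Nat.log 2 t + 1 := by
  have hl' := heap_isLeaf_iff.mp hl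
  have hmem := heap_val_mem l
  have hlow : Nat.log 2 t ≤ Nat.log 2 l.1 := Nat.log_mono_right hl'
  have hhigh : Nat.log 2 l.1 < Nat.log 2 t + 2 := by
    refine Nat.log_lt_of_lt_pow (by omega) ?_
    have := Nat.lt_pow_succ_log_self one_lt_two t
    rw [pow_succ] at this ⊢
    omega
  rw [heap_depth]
  omega

end Heap

end FiniteRootedTree

/-- every tree without unary vertices is dominated (in expected walk
length) by a binary tree with the same number of leaves in which all leaf depths
differ by at most 1. -/
theorem stmt_12 (T : FiniteRootedTree) (hone : ∀ v : T.V, T.numChildren v ≠ 1) :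
    ∃ T' : FiniteRootedTree, (∀ v : T'.V, T'.numChildren v = 2 ∨ T'.numChildren v = 0) ∧
      T'.leaves.card = T.leaves.card ∧
      (∀ l₁ l₂ : T'.V, T'.IsLeaf l₁ → T'.IsLeaf l₂ → T'.depth l₁ ≤ T'.depth l₂ + 1) ∧
      T.g ≤ T'.g := by
  open FiniteRootedTree in
  have ht : 1 ≤ T.leaves.card := T.leaves_nonempty.card_pos
  refine ⟨heap _ ht, heap_numChildren_eq_two_or_zero, card_heap_leaves, fun l₁ l₂ h₁ h₂ => ?_, ?_⟩
  · rcases heap_depth_of_isLeaf h₁ with h | h <;> rcases heap_depth_of_isLeaf h₂ with h' | h' <;>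
      omega
  · rw [g_eq_of_binary heap_numChildren_eq_two_or_zero fun _ => heap_depth_of_isLeaf,
      card_heap_leaves]
    exact g_le_of_numChildren_ne_one hone _
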